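/- arXiv:1403.0527 — 2 statements merged into one kernel-verified Lean document; each statement's English description precedes it below -/
import Mathlib

section
/- For b > 0, σ₁ > 0, σ₂ > 0, β ∈ ℝ and ϱ ∈ (−1,1), the expression b^{-4}e^{-2b}σ₁²(2b(2+b²)βϱσ₁σ₂ + 2(β²σ₁² − 2bβϱσ₁σ₂ + b²σ₂²)cosh b − (2+b²)β²σ₁² − b²(2+b²ϱ²)σ₂²) is strictly greater than b^{-4}e^{-2b}σ₁²·b⁴(1−ϱ²)σ₂², and hence strictly positive. -/
theorem expression_pos (b σ₁ σ₂ β ϱ : ℝ)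
    (hb : 0 < b) (hσ₁ : 0 < σ₁) (hσ₂ : 0 < σ₂) (hϱ₁ : -1 < ϱ) (hϱ₂ : ϱ < 1) :
    b⁻¹ ^ 4 * Real.exp (-2 * b) * σ₁ ^ 2 *
      (2 * b * (2 + b ^ 2) * β * ϱ * σ₁ * σ₂
        + 2 * (β ^ 2 * σ₁ ^ 2 - 2 * b * β * ϱ * σ₁ * σ₂ + b ^ 2 * σ₂ ^ 2) * Real.cosh b
        - (2 + b ^ 2) * β ^ 2 * σ₁ ^ 2 - b ^ 2 * (2 + b ^ 2 * ϱ ^ 2) * σ₂ ^ 2)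
      > b⁻¹ ^ 4 * Real.exp (-2 * b) * σ₁ ^ 2 * (b ^ 4 * (1 - ϱ ^ 2) * σ₂ ^ 2) ∧
    0 < b⁻¹ ^ 4 * Real.exp (-2 * b) * σ₁ ^ 2 *
      (2 * b * (2 + b ^ 2) * β * ϱ * σ₁ * σ₂
        + 2 * (β ^ 2 * σ₁ ^ 2 - 2 * b * β * ϱ * σ₁ * σ₂ + b ^ 2 * σ₂ ^ 2) * Real.cosh b
        - (2 + b ^ 2) * β ^ 2 * σ₁ ^ 2 - b ^ 2 * (2 + b ^ 2 * ϱ ^ 2) * σ₂ ^ 2) := by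
  have h1ρ : 0 < 1 - ϱ ^ 2 := by nlinarith
  have hc : 1 + b ^ 2 / 2 < Real.cosh b := by
    have h2 : Real.cosh b = 2 * Real.sinh (b / 2) ^ 2 + 1 := by
      rw [show b = 2 * (b / 2) by ring, Real.cosh_two_mul, Real.cosh_sq]; ring
    have hs : b / 2 < Real.sinh (b / 2) := Real.self_lt_sinh_iff.mpr (by linarith)
    nlinarith
  have hQ : 0 < β ^ 2 * σ₁ ^ 2 - 2 * b * β * ϱ * σ₁ * σ₂ + b ^ 2 * σ₂ ^ 2 := by
    nlinarith [sq_nonneg (β * σ₁ - b * ϱ * σ₂),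
      mul_pos (mul_pos (mul_pos hb hb) h1ρ) (mul_pos hσ₂ hσ₂)]
  have hinner : 2 * b * (2 + b ^ 2) * β * ϱ * σ₁ * σ₂
        + 2 * (β ^ 2 * σ₁ ^ 2 - 2 * b * β * ϱ * σ₁ * σ₂ + b ^ 2 * σ₂ ^ 2) * Real.cosh b
        - (2 + b ^ 2) * β ^ 2 * σ₁ ^ 2 - b ^ 2 * (2 + b ^ 2 * ϱ ^ 2) * σ₂ ^ 2
      > b ^ 4 * (1 - ϱ ^ 2) * σ₂ ^ 2 := by
    nlinarith [mul_pos hQ (show (0:ℝ) < Real.cosh b - 1 - b ^ 2 / 2 by linarith)]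
  have hcpos : 0 < b⁻¹ ^ 4 * Real.exp (-2 * b) * σ₁ ^ 2 :=
    mul_pos (mul_pos (pow_pos (inv_pos.mpr hb) 4) (Real.exp_pos _)) (pow_pos hσ₁ 2)
  have hrhs : 0 < b ^ 4 * (1 - ϱ ^ 2) * σ₂ ^ 2 := by
    have := h1ρ
    positivity
  constructor
  · exact mul_lt_mul_of_pos_left hinner hcpos
  · exact lt_trans (mul_pos hcpos hrhs) (mul_lt_mul_of_pos_left hinner hcpos)
end

section
/- The map g : ℝ₊₊² × ℝ² → ℝ₊₊ × (0,1) × ℝ², g(a,b,α,β) = (a b⁻¹(1−e^{−b}), e^{−b}, α − aβb⁻²(e^{−b}−1+b), −βb⁻¹(1−e^{−b})), is a bijection with inverse g⁻¹(c,d,γ,δ) = (−c·(log d)/(1−d), −log d, γ − cδ(d−1−log d)/(1−d)², δ·(log d)/(1−d)). -/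
open Real Set

theorem g_bijection
    (g ginv : ℝ × ℝ × ℝ × ℝ → ℝ × ℝ × ℝ × ℝ)
    (hg : ∀ a b α β : ℝ, g (a, b, α, β) =
      (a * b⁻¹ * (1 - exp (-b)), exp (-b),
       α - a * β * b⁻¹ ^ 2 * (exp (-b) - 1 + b), -β * b⁻¹ * (1 - exp (-b))))
    (hginv : ∀ c d γ δ : ℝ, ginv (c, d, γ, δ) =
      (-c * log d / (1 - d), -log d,
       γ - c * δ * (d - 1 - log d) / (1 - d) ^ 2, δ * log d / (1 - d))) :
    Set.BijOn g {p : ℝ × ℝ × ℝ × ℝ | 0 < p.1 ∧ 0 < p.2.1}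
      {q : ℝ × ℝ × ℝ × ℝ | 0 < q.1 ∧ q.2.1 ∈ Set.Ioo (0 : ℝ) 1} ∧
    Set.EqOn (ginv ∘ g) id {p : ℝ × ℝ × ℝ × ℝ | 0 < p.1 ∧ 0 < p.2.1} ∧
    Set.EqOn (g ∘ ginv) id {q : ℝ × ℝ × ℝ × ℝ | 0 < q.1 ∧ q.2.1 ∈ Set.Ioo (0 : ℝ) 1} := by
  set S := {p : ℝ × ℝ × ℝ × ℝ | 0 < p.1 ∧ 0 < p.2.1} with hS
  set T := {q : ℝ × ℝ × ℝ × ℝ | 0 < q.1 ∧ q.2.1 ∈ Set.Ioo (0 : ℝ) 1} with hT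
  have hmap1 : Set.MapsTo g S T := by
    rintro ⟨a, b, α, β⟩ ⟨ha, hb⟩
    simp only [hS, Set.mem_setOf_eq] at ha hb ⊢
    rw [hg]
    have hexp : exp (-b) < 1 := exp_lt_one_iff.mpr (by linarith)
    have hexp0 : 0 < exp (-b) := exp_pos _
    refine ⟨?_, hexp0, hexp⟩
    have : 0 < 1 - exp (-b) := by linarith
    positivity
  have hmap2 : Set.MapsTo ginv T S := by
    rintro ⟨c, d, γ, δ⟩ ⟨hc, hd0, hd1⟩
    show 0 < _ ∧ 0 < _
    rw [hginv]
    have hlog : log d < 0 := log_neg hd0 hd1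
    have h1d : 0 < 1 - d := by linarith
    constructor
    · have : 0 < -log d := by linarith
      have := mul_pos (mul_pos hc this) (inv_pos.mpr h1d)
      simpa [div_eq_mul_inv, neg_mul] using this
    · simpa using hlog
  have heq1 : Set.EqOn (ginv ∘ g) id S := by
    rintro ⟨a, b, α, β⟩ ⟨ha, hb⟩
    simp only [hS, Set.mem_setOf_eq] at ha hb
    have hexp : exp (-b) < 1 := exp_lt_one_iff.mpr (by linarith)
    have h1e : 0 < 1 - exp (-b) := by linarith
    have hb' : b ≠ 0 := ne_of_gt hb
    have h1e' : (1 : ℝ) - exp (-b) ≠ 0 := ne_of_gt h1e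
    simp only [Function.comp_apply, hg, hginv, id_eq]
    have hlog : log (exp (-b)) = -b := log_exp _
    rw [hlog]
    refine Prod.ext ?_ (Prod.ext ?_ (Prod.ext ?_ ?_))
    · simp only
      field_simp
      try ring
    · simp
    · simp only
      field_simp
      try ring
    · simp only
      field_simp
      try ring
  have heq2 : Set.EqOn (g ∘ ginv) id T := by
    rintro ⟨c, d, γ, δ⟩ ⟨hc, hd0, hd1⟩
    have hlog : log d < 0 := log_neg hd0 hd1
    have hlog' : log d ≠ 0 := ne_of_lt hlog
    have h1d : (1 : ℝ) - d ≠ 0 := ne_of_gt (by linarith)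
    have hexp : exp (-(-log d)) = d := by rw [neg_neg]; exact exp_log hd0
    simp only [Function.comp_apply, hginv, hg, id_eq, hexp]
    refine Prod.ext ?_ (Prod.ext ?_ (Prod.ext ?_ ?_))
    · simp only
      field_simp
      try ring
    · simp
    · simp only
      field_simp
      try ring
    · simp only
      field_simp
      try ring
  refine ⟨?_, heq1, heq2⟩
  have hinv : Set.InvOn ginv g S T := ⟨fun x hx => heq1 hx, fun x hx => heq2 hx⟩
  exact hinv.bijOn hmap1 hmap2
end
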